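/- arXiv:math/0002105 — 6 statements merged into one kernel-verified Lean document; each statement's English description precedes it below -/
import Mathlib

section
/- Let (A,C)_ψ be an entwining structure. Then the twisted right action act makes A ⊗ C a unital associative right A-module commuting with left multiplication by A: for all x ∈ A ⊗ C, a, b, a'' ∈ A, (1) act(x ⊗ 1) = x; (2) act(act(x ⊗ a) ⊗ b) = act(x ⊗ ab); (3) act((a''·x) ⊗ a) = a''·act(x ⊗ a), where a''·(a' ⊗ c) := (a''a') ⊗ c denotes left multiplication on the first tensor factor. (This is the bimodule part of the statement that A ⊗ C is an A-coring.) -/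
/-!
STATEMENT 0: For an entwining structure (A,C)_ψ, the twisted right action
`act` makes A ⊗ C a unital associative right A-module commuting with left
multiplication by A.
-/

open TensorProduct

noncomputable section

variable {k A C : Type*} [CommRing k] [Ring A] [Algebra k A]
  [AddCommGroup C] [Module k C] [Coalgebra k C]

/-- The twisted right action `act : (A ⊗ C) ⊗ A → A ⊗ C`,
`act((a' ⊗ c) ⊗ a) = (μ ⊗ C)(a' ⊗ ψ(c ⊗ a))`. -/
def act (ψ : C ⊗[k] A →ₗ[k] A ⊗[k] C) :
    (A ⊗[k] C) ⊗[k] A →ₗ[k] A ⊗[k] C :=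
  LinearMap.rTensor C (LinearMap.mul' k A) ∘ₗ
    (TensorProduct.assoc k A A C).symm.toLinearMap ∘ₗ
    LinearMap.lTensor A ψ ∘ₗ
    (TensorProduct.assoc k A C A).toLinearMap

/-- `(A ⊗ ε) : A ⊗ C → A` (composed with the canonical iso `A ⊗ k ≅ A`). -/
def epsA : A ⊗[k] C →ₗ[k] A :=
  (TensorProduct.rid k A).toLinearMap ∘ₗ
    LinearMap.lTensor A (Coalgebra.counit (R := k) (A := C))

/-- Left multiplication by `a` on the first tensor factor of `A ⊗ C`. -/
def lmul (a : A) : A ⊗[k] C →ₗ[k] A ⊗[k] C :=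
  LinearMap.rTensor C (LinearMap.mulLeft k a)


lemma act_tmul (ψ : C ⊗[k] A →ₗ[k] A ⊗[k] C) (a' : A) (c : C) (a : A) :
    act ψ ((a' ⊗ₜ c) ⊗ₜ a) = lmul a' (ψ (c ⊗ₜ a)) := by
  simp only [act, lmul, LinearMap.coe_comp, Function.comp_apply,
    LinearEquiv.coe_coe, TensorProduct.assoc_tmul, LinearMap.lTensor_tmul]
  induction ψ (c ⊗ₜ a) using TensorProduct.induction_on with
  | zero => simp
  | tmul b d => simp [LinearMap.mul'_apply]
  | add u v hu hv => simp_all [tmul_add]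

lemma lmul_mul (a b : A) (x : A ⊗[k] C) :
    lmul (a * b) x = lmul a (lmul (k := k) b x) := by
  induction x using TensorProduct.induction_on with
  | zero => simp
  | tmul a' c => simp [lmul, mul_assoc]
  | add u v hu hv => simp_all

lemma act_lmul (ψ : C ⊗[k] A →ₗ[k] A ⊗[k] C) (a'' : A) (y : A ⊗[k] C) (a : A) :
    act ψ (lmul a'' y ⊗ₜ a) = lmul a'' (act ψ (y ⊗ₜ a)) := by
  induction y using TensorProduct.induction_on with
  | zero => simp [lmul]
  | tmul a' c =>
      have : lmul (k := k) a'' (a' ⊗ₜ c) = (a'' * a') ⊗ₜ c := by simp [lmul]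
      rw [this, act_tmul, act_tmul, lmul_mul]
  | add u v hu hv =>
      have h1 : (lmul (k := k) a'' (u + v)) ⊗ₜ[k] a
          = lmul a'' u ⊗ₜ a + lmul (k := k) a'' v ⊗ₜ a := by
        rw [map_add, add_tmul]
      rw [h1, map_add, hu, hv]
      rw [show (u + v) ⊗ₜ[k] a = u ⊗ₜ a + v ⊗ₜ a from add_tmul u v a,
        map_add, map_add]

theorem statement0 (ψ : C ⊗[k] A →ₗ[k] A ⊗[k] C)
    -- (i) ψ ∘ (C ⊗ μ) = (μ ⊗ C) ∘ (A ⊗ ψ) ∘ (ψ ⊗ A)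
    (hmul : ∀ (c : C) (a b : A), ψ (c ⊗ₜ (a * b)) = act ψ (ψ (c ⊗ₜ a) ⊗ₜ b))
    -- (ii) (A ⊗ Δ) ∘ ψ = (ψ ⊗ C) ∘ (C ⊗ ψ) ∘ (Δ ⊗ A)
    (hcomul : LinearMap.lTensor A (Coalgebra.comul (R := k) (A := C)) ∘ₗ ψ =
      (TensorProduct.assoc k A C C).toLinearMap ∘ₗ
        LinearMap.rTensor C ψ ∘ₗ
        (TensorProduct.assoc k C A C).symm.toLinearMap ∘ₗ
        LinearMap.lTensor C ψ ∘ₗ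
        (TensorProduct.assoc k C C A).toLinearMap ∘ₗ
        LinearMap.rTensor A (Coalgebra.comul (R := k) (A := C)))
    -- (iii) ψ(c ⊗ 1) = 1 ⊗ c
    (hone : ∀ c : C, ψ (c ⊗ₜ (1 : A)) = (1 : A) ⊗ₜ c)
    -- (iv) (A ⊗ ε)(ψ(c ⊗ a)) = ε(c)a
    (hcounit : ∀ (c : C) (a : A),
      epsA (ψ (c ⊗ₜ a)) = Coalgebra.counit (R := k) c • a) :
    -- (1) act(x ⊗ 1) = x
    (∀ x : A ⊗[k] C, act ψ (x ⊗ₜ (1 : A)) = x) ∧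
    -- (2) act(act(x ⊗ a) ⊗ b) = act(x ⊗ ab)
    (∀ (x : A ⊗[k] C) (a b : A),
      act ψ (act ψ (x ⊗ₜ a) ⊗ₜ b) = act ψ (x ⊗ₜ (a * b))) ∧
    -- (3) act((a''·x) ⊗ a) = a''·act(x ⊗ a)
    (∀ (x : A ⊗[k] C) (a a'' : A),
      act ψ (lmul a'' x ⊗ₜ a) = lmul a'' (act ψ (x ⊗ₜ a))) := by
  refine ⟨?_, ?_, fun x a a'' => act_lmul ψ a'' x a⟩
  · intro x
    induction x using TensorProduct.induction_on with
    | zero => simp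
    | tmul a' c => rw [act_tmul, hone]; simp [lmul]
    | add u v hu hv => rw [add_tmul, map_add, hu, hv]
  · intro x a b
    induction x using TensorProduct.induction_on with
    | zero => simp
    | tmul a' c =>
        rw [act_tmul, act_tmul, act_lmul, hmul]
    | add u v hu hv =>
        rw [add_tmul, map_add, add_tmul, map_add, hu, hv,
          show (u + v) ⊗ₜ[k] (a * b) = u ⊗ₜ (a*b) + v ⊗ₜ (a*b) from add_tmul _ _ _,
          map_add]
end
end

section
/- Let (A,C)_ψ be an entwining structure. Then the maps ε_C := A ⊗ ε : A ⊗ C → A and Δ_C := A ⊗ Δ : A ⊗ C → A ⊗ C ⊗ C are right A-linear with respect to the twisted right action: for all a', a ∈ A and c ∈ C, (1) (A ⊗ ε)(act(x ⊗ a)) = ((A ⊗ ε)(x))·a for all x ∈ A ⊗ C; (2) (A ⊗ Δ)(act((a' ⊗ c) ⊗ a)) = Σ act((a' ⊗ c₍₁₎) ⊗ a_α) ⊗ c₍₂₎^α, where ψ(c₍₂₎ ⊗ a) = Σ a_α ⊗ c₍₂₎^α. (This is the counit/coproduct right A-linearity in the statement that A ⊗ C is an A-coring with coproduct A ⊗ Δ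 and counit A ⊗ ε.) -/
/-!
STATEMENT 1: For an entwining structure (A,C)_ψ, the counit ε_C = A ⊗ ε and
the coproduct Δ_C = A ⊗ Δ on A ⊗ C are right A-linear for the twisted action.
-/

open TensorProduct

noncomputable section

variable {k A C : Type*} [CommRing k] [Ring A] [Algebra k A]
  [AddCommGroup C] [Module k C] [Coalgebra k C]

lemma act_eq (ψ : C ⊗[k] A →ₗ[k] A ⊗[k] C) (a' : A) (c : C) (a : A) :
    act ψ ((a' ⊗ₜ c) ⊗ₜ a) =
      LinearMap.rTensor C (LinearMap.mulLeft k a') (ψ (c ⊗ₜ a)) := by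
  simp only [act, LinearMap.comp_apply, LinearEquiv.coe_coe, assoc_tmul,
    LinearMap.lTensor_tmul]
  induction ψ (c ⊗ₜ a) using TensorProduct.induction_on with
  | zero => simp
  | tmul b d => simp [LinearMap.mul'_apply]
  | add u v hu hv => simp_all [tmul_add]

lemma epsA_rTensor (f : A →ₗ[k] A) (w : A ⊗[k] C) :
    epsA (LinearMap.rTensor C f w) = f (epsA w) := by
  induction w using TensorProduct.induction_on with
  | zero => simp
  | tmul b d => simp [epsA]
  | add u v hu hv => simp_all

lemma assoc_rT_rT (f : A →ₗ[k] A) (w : (A ⊗[k] C) ⊗[k] C) :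
    TensorProduct.assoc k A C C (LinearMap.rTensor C (LinearMap.rTensor C f) w) =
      LinearMap.rTensor (C ⊗[k] C) f (TensorProduct.assoc k A C C w) := by
  induction w using TensorProduct.induction_on with
  | zero => simp
  | tmul u d =>
    induction u using TensorProduct.induction_on with
    | zero => simp
    | tmul b e => simp
    | add u v hu hv => simp_all [add_tmul]
  | add u v hu hv => simp_all

theorem statement1 (ψ : C ⊗[k] A →ₗ[k] A ⊗[k] C)
    -- (i) ψ ∘ (C ⊗ μ) = (μ ⊗ C) ∘ (A ⊗ ψ) ∘ (ψ ⊗ A)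
    (hmul : ∀ (c : C) (a b : A), ψ (c ⊗ₜ (a * b)) = act ψ (ψ (c ⊗ₜ a) ⊗ₜ b))
    -- (ii) (A ⊗ Δ) ∘ ψ = (ψ ⊗ C) ∘ (C ⊗ ψ) ∘ (Δ ⊗ A)
    (hcomul : LinearMap.lTensor A (Coalgebra.comul (R := k) (A := C)) ∘ₗ ψ =
      (TensorProduct.assoc k A C C).toLinearMap ∘ₗ
        LinearMap.rTensor C ψ ∘ₗ
        (TensorProduct.assoc k C A C).symm.toLinearMap ∘ₗ
        LinearMap.lTensor C ψ ∘ₗ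
        (TensorProduct.assoc k C C A).toLinearMap ∘ₗ
        LinearMap.rTensor A (Coalgebra.comul (R := k) (A := C)))
    -- (iii) ψ(c ⊗ 1) = 1 ⊗ c
    (hone : ∀ c : C, ψ (c ⊗ₜ (1 : A)) = (1 : A) ⊗ₜ c)
    -- (iv) (A ⊗ ε)(ψ(c ⊗ a)) = ε(c)a
    (hcounit : ∀ (c : C) (a : A),
      epsA (ψ (c ⊗ₜ a)) = Coalgebra.counit (R := k) c • a) :
    -- (1) ε_C is right A-linear: (A ⊗ ε)(act(x ⊗ a)) = ((A ⊗ ε)(x))·a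
    (∀ (x : A ⊗[k] C) (a : A), epsA (act ψ (x ⊗ₜ a)) = epsA x * a) ∧
    -- (2) Δ_C is right A-linear:
    -- (A ⊗ Δ)(act((a' ⊗ c) ⊗ a)) = Σ act((a' ⊗ c₍₁₎) ⊗ a_α) ⊗ c₍₂₎^α,
    -- where ψ(c₍₂₎ ⊗ a) = Σ a_α ⊗ c₍₂₎^α
    (∀ (a' : A) (c : C) (a : A),
      LinearMap.lTensor A (Coalgebra.comul (R := k) (A := C))
          (act ψ ((a' ⊗ₜ c) ⊗ₜ a)) =
        (TensorProduct.assoc k A C C)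
          (LinearMap.rTensor C
            (act ψ ∘ₗ LinearMap.rTensor A (TensorProduct.mk k A C a'))
            ((TensorProduct.assoc k C A C).symm
              (LinearMap.lTensor C ψ
                ((TensorProduct.assoc k C C A)
                  (LinearMap.rTensor A (Coalgebra.comul (R := k) (A := C))
                    (c ⊗ₜ a))))))) := by
  constructor
  · intro x a
    induction x using TensorProduct.induction_on with
    | zero => simp [tmul_zero, zero_tmul]
    | tmul a' c =>
      rw [act_eq, epsA_rTensor, hcounit]
      simp [epsA, LinearMap.mulLeft_apply, mul_smul_comm, smul_mul_assoc]
    | add u v hu hv => simp_all [add_tmul, add_mul]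
  · intro a' c a
    have g_eq : act ψ ∘ₗ LinearMap.rTensor A (TensorProduct.mk k A C a') =
        LinearMap.rTensor C (LinearMap.mulLeft k a') ∘ₗ ψ := by
      apply TensorProduct.ext'
      intro c' b
      simp [act_eq]
    rw [g_eq, LinearMap.rTensor_comp, LinearMap.comp_apply, assoc_rT_rT, act_eq]
    have hc := LinearMap.congr_fun hcomul (c ⊗ₜ a)
    simp only [LinearMap.comp_apply, LinearEquiv.coe_coe] at hc
    rw [← hc]
    induction ψ (c ⊗ₜ a) using TensorProduct.induction_on with
    | zero => simp
    | tmul b d => simp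
    | add u v hu hv => simp_all
end
end

section
/- Let (A,C)_ψ be an entwining structure. Then the k-module Hom_k(C, A) of k-linear maps from C to A is an associative unital k-algebra under the ψ-twisted convolution product f *_ψ g := μ ∘ (A ⊗ g) ∘ ψ ∘ (C ⊗ f) ∘ Δ (explicitly, (f *_ψ g)(c) = Σ f(c₍₂₎)_α g(c₍₁₎^α), where ψ(c₍₁₎ ⊗ f(c₍₂₎)) = Σ f(c₍₂₎)_α ⊗ c₍₁₎^α), with unit the map c ↦ ε(c)1_A. -/
/-!
STATEMENT 7: For an entwining structure (A,C)_ψ, Hom_k(C,A) is an associative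
unital k-algebra under the ψ-twisted convolution product
f *_ψ g = μ ∘ (A ⊗ g) ∘ ψ ∘ (C ⊗ f) ∘ Δ, with unit c ↦ ε(c)1.
-/

open TensorProduct

noncomputable section

variable {k A C : Type*} [CommRing k] [Ring A] [Algebra k A]
  [AddCommGroup C] [Module k C] [Coalgebra k C]

/-- The ψ-twisted convolution product `f *_ψ g = μ ∘ (A ⊗ g) ∘ ψ ∘ (C ⊗ f) ∘ Δ`. -/
def conv (ψ : C ⊗[k] A →ₗ[k] A ⊗[k] C) (f g : C →ₗ[k] A) : C →ₗ[k] A :=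
  LinearMap.mul' k A ∘ₗ LinearMap.lTensor A g ∘ₗ ψ ∘ₗ LinearMap.lTensor C f ∘ₗ
    Coalgebra.comul (R := k) (A := C)

/-- The unit of the twisted convolution algebra: `c ↦ ε(c)1`. -/
def convUnit : C →ₗ[k] A :=
  Algebra.linearMap k A ∘ₗ Coalgebra.counit (R := k) (A := C)

open LinearMap

/-- Elementwise form of the entwining multiplicativity axiom, for a general
second tensorand. -/
lemma aux_E1 (ψ : C ⊗[k] A →ₗ[k] A ⊗[k] C)
    (hmul : ∀ (c : C) (a b : A), ψ (c ⊗ₜ (a * b)) = act ψ (ψ (c ⊗ₜ a) ⊗ₜ b))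
    (c : C) (y : A ⊗[k] A) :
    ψ (c ⊗ₜ (LinearMap.mul' k A y)) =
      act ψ (LinearMap.rTensor A ψ ((TensorProduct.assoc k C A A).symm (c ⊗ₜ y))) := by
  induction y using TensorProduct.induction_on with
  | zero => simp [tmul_zero]
  | tmul a b => simpa using hmul c a b
  | add y₁ y₂ h₁ h₂ => simp [map_add, tmul_add, h₁, h₂]

lemma aux_swap (ψ : C ⊗[k] A →ₗ[k] A ⊗[k] C) (g : C →ₗ[k] A) (c : C) (s : A ⊗[k] C) :
    LinearMap.rTensor A ψ
        ((TensorProduct.assoc k C A A).symm (c ⊗ₜ LinearMap.lTensor A g s)) =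
      LinearMap.lTensor (A ⊗[k] C) g
        (LinearMap.rTensor C ψ ((TensorProduct.assoc k C A C).symm (c ⊗ₜ s))) := by
  induction s using TensorProduct.induction_on with
  | zero => simp [tmul_zero]
  | tmul b d => simp
  | add s₁ s₂ h₁ h₂ => simp [map_add, tmul_add, h₁, h₂]

lemma aux_K (ψ : C ⊗[k] A →ₗ[k] A ⊗[k] C)
    (hmul : ∀ (c : C) (a b : A), ψ (c ⊗ₜ (a * b)) = act ψ (ψ (c ⊗ₜ a) ⊗ₜ b))
    (f g h : C →ₗ[k] A) (w : C ⊗[k] (C ⊗[k] C)) :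
    LinearMap.mul' k A (lTensor A h (ψ
        (lTensor C (LinearMap.mul' k A ∘ₗ lTensor A g ∘ₗ ψ ∘ₗ lTensor C f) w))) =
      LinearMap.mul' k A (lTensor A h (act ψ (lTensor (A ⊗[k] C) g
        (rTensor C ψ ((TensorProduct.assoc k C A C).symm
          (lTensor C ψ ((TensorProduct.assoc k C C A)
            (lTensor (C ⊗[k] C) f ((TensorProduct.assoc k C C C).symm w))))))))) := by
  induction w using TensorProduct.induction_on with
  | zero => simp only [map_zero]
  | add w₁ w₂ h₁ h₂ => simp only [map_add, h₁, h₂]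
  | tmul c₁ x =>
    induction x using TensorProduct.induction_on with
    | zero => simp [tmul_zero]
    | add x₁ x₂ h₁ h₂ => simp only [tmul_add, map_add, h₁, h₂]
    | tmul c₂ c₃ =>
      simp only [lTensor_tmul, comp_apply, assoc_symm_tmul, rTensor_tmul, assoc_tmul]
      rw [aux_E1 ψ hmul c₁ (lTensor A g (ψ (c₂ ⊗ₜ f c₃))),
        aux_swap ψ g c₁ (ψ (c₂ ⊗ₜ f c₃))]

lemma aux_M' (h : C →ₗ[k] A) (a : A) (s : A ⊗[k] C) :
    LinearMap.mul' k A (lTensor A h (rTensor C (LinearMap.mul' k A)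
        ((TensorProduct.assoc k A A C).symm (a ⊗ₜ s)))) =
      LinearMap.mul' k A (lTensor A (LinearMap.mul' k A)
        (lTensor A (lTensor A h) (a ⊗ₜ s))) := by
  induction s using TensorProduct.induction_on with
  | zero => simp [tmul_zero]
  | tmul b d => simp [mul_assoc]
  | add s₁ s₂ h₁ h₂ => simp [map_add, tmul_add, h₁, h₂]

lemma aux_M (ψ : C ⊗[k] A →ₗ[k] A ⊗[k] C) (g h : C →ₗ[k] A) (v : A ⊗[k] (C ⊗[k] C)) :
    LinearMap.mul' k A (lTensor A h (act ψ (lTensor (A ⊗[k] C) g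
        ((TensorProduct.assoc k A C C).symm v)))) =
      LinearMap.mul' k A (lTensor A (LinearMap.mul' k A) (lTensor A (lTensor A h)
        (lTensor A ψ (lTensor A (lTensor C g) v)))) := by
  induction v using TensorProduct.induction_on with
  | zero => simp only [map_zero]
  | add v₁ v₂ h₁ h₂ => simp only [map_add, h₁, h₂]
  | tmul a x =>
    induction x using TensorProduct.induction_on with
    | zero => simp [tmul_zero]
    | add x₁ x₂ h₁ h₂ => simp only [tmul_add, map_add, h₁, h₂]
    | tmul c c' =>
      simp only [assoc_symm_tmul, lTensor_tmul, act, comp_apply, assoc_tmul,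
        LinearEquiv.coe_coe]
      exact aux_M' h a (ψ (c ⊗ₜ g c'))


lemma aux_swap2 (f : C →ₗ[k] A) (x : C ⊗[k] C) :
    lTensor (C ⊗[k] C) f (rTensor C (Coalgebra.comul (R := k) (A := C)) x) =
      rTensor A (Coalgebra.comul (R := k) (A := C)) (lTensor C f x) := by
  induction x using TensorProduct.induction_on with
  | zero => simp
  | tmul c₁ c₂ => simp
  | add x₁ x₂ h₁ h₂ => simp only [map_add, h₁, h₂]

lemma aux_swap3 (f : C →ₗ[k] A) (x : C ⊗[k] C) :
    rTensor A (Coalgebra.counit (R := k) (A := C)) (lTensor C f x) =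
      lTensor k f (rTensor C (Coalgebra.counit (R := k) (A := C)) x) := by
  induction x using TensorProduct.induction_on with
  | zero => simp
  | tmul c₁ c₂ => simp
  | add x₁ x₂ h₁ h₂ => simp only [map_add, h₁, h₂]

theorem statement7 (ψ : C ⊗[k] A →ₗ[k] A ⊗[k] C)
    -- (i) ψ ∘ (C ⊗ μ) = (μ ⊗ C) ∘ (A ⊗ ψ) ∘ (ψ ⊗ A)
    (hmul : ∀ (c : C) (a b : A), ψ (c ⊗ₜ (a * b)) = act ψ (ψ (c ⊗ₜ a) ⊗ₜ b))
    -- (ii) (A ⊗ Δ) ∘ ψ = (ψ ⊗ C) ∘ (C ⊗ ψ) ∘ (Δ ⊗ A)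
    (hcomul : LinearMap.lTensor A (Coalgebra.comul (R := k) (A := C)) ∘ₗ ψ =
      (TensorProduct.assoc k A C C).toLinearMap ∘ₗ
        LinearMap.rTensor C ψ ∘ₗ
        (TensorProduct.assoc k C A C).symm.toLinearMap ∘ₗ
        LinearMap.lTensor C ψ ∘ₗ
        (TensorProduct.assoc k C C A).toLinearMap ∘ₗ
        LinearMap.rTensor A (Coalgebra.comul (R := k) (A := C)))
    -- (iii) ψ(c ⊗ 1) = 1 ⊗ c
    (hone : ∀ c : C, ψ (c ⊗ₜ (1 : A)) = (1 : A) ⊗ₜ c)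
    -- (iv) (A ⊗ ε)(ψ(c ⊗ a)) = ε(c)a
    (hcounit : ∀ (c : C) (a : A),
      epsA (ψ (c ⊗ₜ a)) = Coalgebra.counit (R := k) c • a) :
    -- associativity
    (∀ f g h : C →ₗ[k] A, conv ψ (conv ψ f g) h = conv ψ f (conv ψ g h)) ∧
    -- unit laws
    (∀ f : C →ₗ[k] A, conv ψ convUnit f = f) ∧
    (∀ f : C →ₗ[k] A, conv ψ f convUnit = f) ∧
    -- k-bilinearity of the product
    (∀ f f' g : C →ₗ[k] A, conv ψ (f + f') g = conv ψ f g + conv ψ f' g) ∧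
    (∀ f g g' : C →ₗ[k] A, conv ψ f (g + g') = conv ψ f g + conv ψ f g') ∧
    (∀ (s : k) (f g : C →ₗ[k] A), conv ψ (s • f) g = s • conv ψ f g) ∧
    (∀ (s : k) (f g : C →ₗ[k] A), conv ψ f (s • g) = s • conv ψ f g) := by
  have capply : ∀ (u v : C →ₗ[k] A) (x : C),
      conv ψ u v x =
        LinearMap.mul' k A (lTensor A v (ψ (lTensor C u (Coalgebra.comul (R := k) x)))) :=
    fun _ _ _ => rfl
  refine ⟨?_, ?_, ?_, ?_, ?_, ?_, ?_⟩
  · -- associativity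
    intro f g h
    apply LinearMap.ext; intro c
    have e₁ : conv ψ f g =
        (LinearMap.mul' k A ∘ₗ lTensor A g ∘ₗ ψ ∘ₗ lTensor C f) ∘ₗ
          Coalgebra.comul (R := k) (A := C) := by
      simp only [conv, comp_assoc]
    have key : LinearMap.mul' k A (lTensor A h (ψ
          (lTensor C (conv ψ f g) (Coalgebra.comul (R := k) c)))) =
        LinearMap.mul' k A (lTensor A (conv ψ g h) (ψ
          (lTensor C f (Coalgebra.comul (R := k) c)))) := by
      rw [e₁, lTensor_comp_apply]
      rw [aux_K ψ hmul f g h]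
      rw [Coalgebra.coassoc_symm_apply (R := k) c]
      rw [aux_swap2 f (Coalgebra.comul (R := k) c)]
      have hco := LinearMap.congr_fun hcomul (lTensor C f (Coalgebra.comul (R := k) c))
      simp only [comp_apply, LinearEquiv.coe_coe] at hco
      rw [show rTensor C ψ ((TensorProduct.assoc k C A C).symm
            (lTensor C ψ ((TensorProduct.assoc k C C A)
              (rTensor A (Coalgebra.comul (R := k) (A := C))
                (lTensor C f (Coalgebra.comul (R := k) c)))))) =
          (TensorProduct.assoc k A C C).symm
            (lTensor A (Coalgebra.comul (R := k) (A := C))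
              (ψ (lTensor C f (Coalgebra.comul (R := k) c)))) from
        ((LinearEquiv.symm_apply_eq _).mpr hco).symm]
      rw [aux_M ψ g h]
      rw [show lTensor A (conv ψ g h) (ψ (lTensor C f (Coalgebra.comul (R := k) c))) =
          lTensor A (LinearMap.mul' k A) (lTensor A (lTensor A h) (lTensor A ψ
            (lTensor A (lTensor C g) (lTensor A (Coalgebra.comul (R := k) (A := C))
              (ψ (lTensor C f (Coalgebra.comul (R := k) c))))))) from by
        rw [conv, lTensor_comp_apply, lTensor_comp_apply, lTensor_comp_apply,
          lTensor_comp_apply]]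
    rw [capply, capply]
    exact key
  · -- left unit
    intro f
    apply LinearMap.ext; intro c
    have h1 : lTensor C (convUnit (k := k) (A := A) (C := C))
        (Coalgebra.comul (R := k) c) = c ⊗ₜ (1 : A) := by
      rw [convUnit, lTensor_comp, comp_apply, Coalgebra.lTensor_counit_comul,
        lTensor_tmul]
      simp
    rw [capply, h1, hone c, lTensor_tmul]
    simp
  · -- right unit
    intro f
    apply LinearMap.ext; intro c
    have P1 : ∀ x : A ⊗[k] C,
        LinearMap.mul' k A (lTensor A (convUnit (k := k) (A := A) (C := C)) x) =
          epsA x := by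
      intro x
      induction x using TensorProduct.induction_on with
      | zero => simp
      | tmul a d =>
        simp only [lTensor_tmul, LinearMap.mul'_apply, convUnit, comp_apply,
          Algebra.linearMap_apply, epsA, LinearEquiv.coe_coe, rid_tmul]
        rw [← Algebra.commutes, ← Algebra.smul_def]
      | add x₁ x₂ h₁ h₂ => simp only [map_add, h₁, h₂]
    have P2 : ∀ x : C ⊗[k] A,
        epsA (ψ x) = (TensorProduct.lid k A)
          (rTensor A (Coalgebra.counit (R := k) (A := C)) x) := by
      intro x
      induction x using TensorProduct.induction_on with
      | zero => simp
      | tmul d a => rw [hcounit d a]; simp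
      | add x₁ x₂ h₁ h₂ => simp only [map_add, h₁, h₂]
    rw [capply, P1, P2, aux_swap3 f, Coalgebra.rTensor_counit_comul]
    simp
  · intro f f' g
    apply LinearMap.ext; intro c
    simp [conv, lTensor_add, map_add]
  · intro f g g'
    apply LinearMap.ext; intro c
    simp [conv, lTensor_add, map_add]
  · intro s f g
    apply LinearMap.ext; intro c
    simp [conv, lTensor_smul, map_smul]
  · intro s f g
    apply LinearMap.ext; intro c
    simp [conv, lTensor_smul, map_smul]

end
end

section
/- (Separability of the forgetful functor from a normalized integral map; the '⇐' direction of the separability theorem for the forgetful functor, specialized to the coring of an entwining structure.) Let (A,C)_ψ be an entwining structure with a normalized integral map γ : C ⊗ C → A, and let M be an entwined (A,C)_ψ-module with coaction ρ^M. Define the k-linear map ν_M : M ⊗ C → M by ν_M(m ⊗ c) = Σ m₍₀₎·γ(m₍₁₎ ⊗ c), i.e. ν_M = ρ_M ∘ (M ⊗ γ) ∘ (ρ^M ⊗ C), where ρ_M denotes the A-action on M. Then: (1) ν_M ∘ ρ^M = id_M; (2) ν_M is right A-linear for the twisted action, i.e. ν_M(act^M(x ⊗ a)) = ν_M(x)·a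 for all x ∈ M ⊗ C, a ∈ A; (3) ν_M is right C-colinear, i.e. ρ^M ∘ ν_M = (ν_M ⊗ C) ∘ (M ⊗ Δ). -/
/-!
STATEMENT 10: For an entwining structure (A,C)_ψ with a normalized integral map
γ : C ⊗ C → A, and an entwined module M, the map
ν_M(m ⊗ c) = Σ m₍₀₎·γ(m₍₁₎ ⊗ c) splits the coaction, is right A-linear for the
twisted action and right C-colinear.
-/

open TensorProduct

noncomputable section

variable {k A C M : Type*} [CommRing k] [Ring A] [Algebra k A]
  [AddCommGroup C] [Module k C] [Coalgebra k C]
  [AddCommGroup M] [Module k M]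

/-- `(M ⊗ ε) : M ⊗ C → M`. -/
def epsM : M ⊗[k] C →ₗ[k] M :=
  (TensorProduct.rid k M).toLinearMap ∘ₗ
    LinearMap.lTensor M (Coalgebra.counit (R := k) (A := C))

/-- The twisted action on `M ⊗ C`: `act^M((m ⊗ c) ⊗ a) = Σ m·a_α ⊗ c^α`. -/
def actM (smul : M →ₗ[k] A →ₗ[k] M) (ψ : C ⊗[k] A →ₗ[k] A ⊗[k] C) :
    (M ⊗[k] C) ⊗[k] A →ₗ[k] M ⊗[k] C :=
  LinearMap.rTensor C (TensorProduct.lift smul) ∘ₗ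
    (TensorProduct.assoc k M A C).symm.toLinearMap ∘ₗ
    LinearMap.lTensor M ψ ∘ₗ
    (TensorProduct.assoc k M C A).toLinearMap

/-- `ν_M : M ⊗ C → M`, `ν_M(m ⊗ c) = Σ m₍₀₎·γ(m₍₁₎ ⊗ c)`,
i.e. `ν_M = ρ_M ∘ (M ⊗ γ) ∘ (ρ^M ⊗ C)`. -/
def nuGamma (smul : M →ₗ[k] A →ₗ[k] M) (ρM : M →ₗ[k] M ⊗[k] C)
    (γ : C ⊗[k] C →ₗ[k] A) : M ⊗[k] C →ₗ[k] M :=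
  TensorProduct.lift smul ∘ₗ
    LinearMap.lTensor M γ ∘ₗ
    (TensorProduct.assoc k M C C).toLinearMap ∘ₗ
    LinearMap.rTensor C ρM

theorem statement10 (ψ : C ⊗[k] A →ₗ[k] A ⊗[k] C)
    -- (i) ψ ∘ (C ⊗ μ) = (μ ⊗ C) ∘ (A ⊗ ψ) ∘ (ψ ⊗ A)
    (hmul : ∀ (c : C) (a b : A), ψ (c ⊗ₜ (a * b)) = act ψ (ψ (c ⊗ₜ a) ⊗ₜ b))
    -- (ii) (A ⊗ Δ) ∘ ψ = (ψ ⊗ C) ∘ (C ⊗ ψ) ∘ (Δ ⊗ A)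
    (hcomul : LinearMap.lTensor A (Coalgebra.comul (R := k) (A := C)) ∘ₗ ψ =
      (TensorProduct.assoc k A C C).toLinearMap ∘ₗ
        LinearMap.rTensor C ψ ∘ₗ
        (TensorProduct.assoc k C A C).symm.toLinearMap ∘ₗ
        LinearMap.lTensor C ψ ∘ₗ
        (TensorProduct.assoc k C C A).toLinearMap ∘ₗ
        LinearMap.rTensor A (Coalgebra.comul (R := k) (A := C)))
    -- (iii) ψ(c ⊗ 1) = 1 ⊗ c
    (hone : ∀ c : C, ψ (c ⊗ₜ (1 : A)) = (1 : A) ⊗ₜ c)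
    -- (iv) (A ⊗ ε)(ψ(c ⊗ a)) = ε(c)a
    (hcounit : ∀ (c : C) (a : A),
      epsA (ψ (c ⊗ₜ a)) = Coalgebra.counit (R := k) c • a)
    -- γ is a normalized integral map:
    (γ : C ⊗[k] C →ₗ[k] A)
    -- (a) Σ γ(c₍₁₎ ⊗ c₍₂₎) = ε(c)1
    (hγnorm : ∀ c : C,
      γ (Coalgebra.comul (R := k) c) = Coalgebra.counit (R := k) c • (1 : A))
    -- (b) Σ a_{αβ} γ(c^β ⊗ c'^α) = γ(c ⊗ c')a
    (hγbal : ∀ (c c' : C) (a : A),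
      LinearMap.mul' k A
        (LinearMap.lTensor A γ
          ((TensorProduct.assoc k A C C)
            (LinearMap.rTensor C ψ
              ((TensorProduct.assoc k C A C).symm
                (c ⊗ₜ (ψ (c' ⊗ₜ a))))))) = γ (c ⊗ₜ c') * a)
    -- (c) Σ ψ(c₍₁₎ ⊗ γ(c₍₂₎ ⊗ c')) = Σ γ(c ⊗ c'₍₁₎) ⊗ c'₍₂₎
    (hγcol : ∀ c c' : C,
      ψ (LinearMap.lTensor C γ
          ((TensorProduct.assoc k C C C)
            ((Coalgebra.comul (R := k) c) ⊗ₜ c'))) =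
        LinearMap.rTensor C γ
          ((TensorProduct.assoc k C C C).symm
            (c ⊗ₜ (Coalgebra.comul (R := k) c'))))
    -- M is an entwined (A,C)_ψ-module:
    (smul : M →ₗ[k] A →ₗ[k] M)
    (hMone : ∀ m : M, smul m 1 = m)
    (hMassoc : ∀ (m : M) (a b : A), smul (smul m a) b = smul m (a * b))
    (ρM : M →ₗ[k] M ⊗[k] C)
    (hcounital : ∀ m : M, epsM (ρM m) = m)
    (hcoassoc : ∀ m : M,
      (TensorProduct.assoc k M C C) (LinearMap.rTensor C ρM (ρM m)) =
        LinearMap.lTensor M (Coalgebra.comul (R := k)) (ρM m))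
    (hentwined : ∀ (m : M) (a : A),
      ρM (smul m a) = actM smul ψ (ρM m ⊗ₜ a)) :
    -- (1) ν_M ∘ ρ^M = id
    (∀ m : M, nuGamma smul ρM γ (ρM m) = m) ∧
    -- (2) ν_M(act^M(x ⊗ a)) = ν_M(x)·a
    (∀ (x : M ⊗[k] C) (a : A),
      nuGamma smul ρM γ (actM smul ψ (x ⊗ₜ a)) = smul (nuGamma smul ρM γ x) a) ∧
    -- (3) ρ^M ∘ ν_M = (ν_M ⊗ C) ∘ (M ⊗ Δ)
    (∀ x : M ⊗[k] C,
      ρM (nuGamma smul ρM γ x) =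
        LinearMap.rTensor C (nuGamma smul ρM γ)
          ((TensorProduct.assoc k M C C).symm
            (LinearMap.lTensor M (Coalgebra.comul (R := k)) x))) := by
  
  have hγnorm' : ∀ c : C, γ (Coalgebra.comul (R := k) c) = Coalgebra.counit (R := k) c • (1 : A) := hγnorm
  refine ⟨?_, ?_, ?_⟩
  · -- Part (1): ν ∘ ρ = id
    intro m
    have key : (TensorProduct.lift smul) ∘ₗ LinearMap.lTensor M γ ∘ₗ
        LinearMap.lTensor M (Coalgebra.comul (R := k) (A := C)) = epsM := by
      apply TensorProduct.ext'
      intro m' c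
      simp only [LinearMap.comp_apply, LinearMap.lTensor_tmul, hγnorm c, epsM,
        LinearEquiv.coe_coe, TensorProduct.rid_tmul, TensorProduct.tmul_smul,
        map_smul, TensorProduct.lift.tmul, LinearMap.smul_apply, hMone]
    have step1 : nuGamma smul ρM γ (ρM m)
        = (TensorProduct.lift smul) (LinearMap.lTensor M γ
            (LinearMap.lTensor M (Coalgebra.comul (R := k) (A := C)) (ρM m))) := by
      simp only [nuGamma, LinearMap.comp_apply, LinearEquiv.coe_coe, hcoassoc m]
    have step2 := LinearMap.congr_fun key (ρM m)
    simp only [LinearMap.comp_apply] at step2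
    rw [step1, step2, hcounital m]
  · -- Part (2): right A-linearity for the twisted action
    intro x a
    induction x using TensorProduct.induction_on with
    | zero => simp [TensorProduct.zero_tmul]
    | add x y hx hy =>
        simp only [TensorProduct.add_tmul, map_add, hx, hy, LinearMap.add_apply, map_add]
    | tmul m c =>
      have hact : actM smul ψ ((m ⊗ₜ[k] c) ⊗ₜ[k] a)
          = LinearMap.rTensor C (TensorProduct.lift smul)
              ((TensorProduct.assoc k M A C).symm (m ⊗ₜ[k] ψ (c ⊗ₜ[k] a))) := by
        simp only [actM, LinearMap.comp_apply, LinearEquiv.coe_coe,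
          TensorProduct.assoc_tmul, LinearMap.lTensor_tmul]
      have hPQ : (nuGamma smul ρM γ) ∘ₗ (LinearMap.rTensor C (TensorProduct.lift smul)) ∘ₗ
            (TensorProduct.assoc k M A C).symm.toLinearMap ∘ₗ
            (TensorProduct.mk k M (A ⊗[k] C) m)
          = TensorProduct.lift smul ∘ₗ LinearMap.lTensor M γ ∘ₗ
              (TensorProduct.assoc k M C C).toLinearMap ∘ₗ
              LinearMap.rTensor C (actM smul ψ) ∘ₗ
              (TensorProduct.assoc k (M ⊗[k] C) A C).symm.toLinearMap ∘ₗ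
            (TensorProduct.mk k (M ⊗[k] C) (A ⊗[k] C) (ρM m)) := by
        apply TensorProduct.ext'
        intro b c'
        simp only [LinearMap.comp_apply, TensorProduct.mk_apply, LinearEquiv.coe_coe,
          TensorProduct.assoc_symm_tmul, LinearMap.rTensor_tmul, TensorProduct.lift.tmul,
          nuGamma]
        rw [hentwined m b]
      have hT : ∀ (m₀ : M) (c' : C),
          (TensorProduct.lift smul ∘ₗ LinearMap.lTensor M γ ∘ₗ
            (TensorProduct.assoc k M C C).toLinearMap ∘ₗ
            ((TensorProduct.mk k (M ⊗[k] C) C).flip c') ∘ₗ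
            LinearMap.rTensor C (TensorProduct.lift smul) ∘ₗ
            (TensorProduct.assoc k M A C).symm.toLinearMap ∘ₗ
            (TensorProduct.mk k M (A ⊗[k] C) m₀))
          = (smul m₀) ∘ₗ LinearMap.mul' k A ∘ₗ LinearMap.lTensor A γ ∘ₗ
            (TensorProduct.assoc k A C C).toLinearMap ∘ₗ
            ((TensorProduct.mk k (A ⊗[k] C) C).flip c') := by
        intro m₀ c'
        apply TensorProduct.ext'
        intro a₁ c₁
        simp only [LinearMap.comp_apply, TensorProduct.mk_apply, LinearMap.flip_apply,
          LinearEquiv.coe_coe, TensorProduct.assoc_symm_tmul, TensorProduct.assoc_tmul,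
          LinearMap.rTensor_tmul, LinearMap.lTensor_tmul, TensorProduct.lift.tmul,
          LinearMap.mul'_apply, hMassoc]
      have hS : ∀ (m₀ : M) (c₀ : C),
          (TensorProduct.lift smul ∘ₗ LinearMap.lTensor M γ ∘ₗ
            (TensorProduct.assoc k M C C).toLinearMap ∘ₗ
            LinearMap.rTensor C (actM smul ψ) ∘ₗ
            (TensorProduct.assoc k (M ⊗[k] C) A C).symm.toLinearMap ∘ₗ
            TensorProduct.mk k (M ⊗[k] C) (A ⊗[k] C) (m₀ ⊗ₜ[k] c₀))
          = (smul m₀) ∘ₗ LinearMap.mul' k A ∘ₗ LinearMap.lTensor A γ ∘ₗ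
            (TensorProduct.assoc k A C C).toLinearMap ∘ₗ
            LinearMap.rTensor C ψ ∘ₗ
            (TensorProduct.assoc k C A C).symm.toLinearMap ∘ₗ
            TensorProduct.mk k C (A ⊗[k] C) c₀ := by
        intro m₀ c₀
        apply TensorProduct.ext'
        intro b c'
        have hT' := LinearMap.congr_fun (hT m₀ c') (ψ (c₀ ⊗ₜ[k] b))
        simp only [LinearMap.comp_apply, TensorProduct.mk_apply, LinearMap.flip_apply,
          LinearEquiv.coe_coe] at hT'
        simp only [LinearMap.comp_apply, TensorProduct.mk_apply, LinearMap.flip_apply,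
          LinearEquiv.coe_coe, TensorProduct.assoc_symm_tmul, LinearMap.rTensor_tmul,
          actM, TensorProduct.assoc_tmul, LinearMap.lTensor_tmul]
        exact hT'
      have hR : TensorProduct.lift smul ∘ₗ LinearMap.lTensor M γ ∘ₗ
            (TensorProduct.assoc k M C C).toLinearMap ∘ₗ
            LinearMap.rTensor C (actM smul ψ) ∘ₗ
            (TensorProduct.assoc k (M ⊗[k] C) A C).symm.toLinearMap ∘ₗ
            ((TensorProduct.mk k (M ⊗[k] C) (A ⊗[k] C)).flip (ψ (c ⊗ₜ[k] a)))
          = TensorProduct.lift smul ∘ₗ LinearMap.lTensor M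
              (LinearMap.mulRight k a ∘ₗ γ ∘ₗ ((TensorProduct.mk k C C).flip c)) := by
        apply TensorProduct.ext'
        intro m₀ c₀
        have hS' := LinearMap.congr_fun (hS m₀ c₀) (ψ (c ⊗ₜ[k] a))
        simp only [LinearMap.comp_apply, TensorProduct.mk_apply, LinearMap.flip_apply,
          LinearEquiv.coe_coe] at hS'
        rw [hγbal c₀ c a] at hS'
        simp only [LinearMap.comp_apply, LinearMap.flip_apply, TensorProduct.mk_apply,
          LinearMap.lTensor_tmul, TensorProduct.lift.tmul, LinearMap.mulRight_apply,
          LinearEquiv.coe_coe]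
        exact hS'
      have hFin : TensorProduct.lift smul ∘ₗ LinearMap.lTensor M
            (LinearMap.mulRight k a ∘ₗ γ ∘ₗ ((TensorProduct.mk k C C).flip c))
          = (smul.flip a) ∘ₗ TensorProduct.lift smul ∘ₗ LinearMap.lTensor M γ ∘ₗ
            (TensorProduct.assoc k M C C).toLinearMap ∘ₗ
            ((TensorProduct.mk k (M ⊗[k] C) C).flip c) := by
        apply TensorProduct.ext'
        intro m₀ c₀
        simp only [LinearMap.comp_apply, LinearMap.flip_apply, TensorProduct.mk_apply,
          LinearMap.lTensor_tmul, TensorProduct.lift.tmul, LinearMap.mulRight_apply,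
          LinearEquiv.coe_coe, TensorProduct.assoc_tmul, hMassoc]
      have e1 := LinearMap.congr_fun hPQ (ψ (c ⊗ₜ[k] a))
      have e2 := LinearMap.congr_fun hR (ρM m)
      have e3 := LinearMap.congr_fun hFin (ρM m)
      simp only [LinearMap.comp_apply, LinearMap.flip_apply, TensorProduct.mk_apply,
        LinearEquiv.coe_coe] at e1 e2 e3
      rw [hact, e1, e2, e3]
      simp only [nuGamma, LinearMap.comp_apply, LinearEquiv.coe_coe,
        LinearMap.rTensor_tmul, LinearMap.flip_apply]
  · -- Part (3): right C-colinearity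
    intro x
    induction x using TensorProduct.induction_on with
    | zero => simp
    | add x y hx hy => simp only [map_add, hx, hy]
    | tmul m c =>
      have hV : ρM ∘ₗ TensorProduct.lift smul ∘ₗ LinearMap.lTensor M γ ∘ₗ
            (TensorProduct.assoc k M C C).toLinearMap ∘ₗ
            ((TensorProduct.mk k (M ⊗[k] C) C).flip c)
          = actM smul ψ ∘ₗ TensorProduct.map ρM γ ∘ₗ
            (TensorProduct.assoc k M C C).toLinearMap ∘ₗ
            ((TensorProduct.mk k (M ⊗[k] C) C).flip c) := by
        apply TensorProduct.ext'
        intro m₀ c₀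
        simp only [LinearMap.comp_apply, LinearMap.flip_apply, TensorProduct.mk_apply,
          LinearEquiv.coe_coe, TensorProduct.assoc_tmul, LinearMap.lTensor_tmul,
          TensorProduct.lift.tmul, TensorProduct.map_tmul]
        rw [hentwined m₀ (γ (c₀ ⊗ₜ[k] c))]
      have hN : TensorProduct.map ρM γ ∘ₗ
            (TensorProduct.assoc k M C C).toLinearMap ∘ₗ
            ((TensorProduct.mk k (M ⊗[k] C) C).flip c)
          = LinearMap.lTensor (M ⊗[k] C) γ ∘ₗ
            (TensorProduct.assoc k (M ⊗[k] C) C C).toLinearMap ∘ₗ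
            ((TensorProduct.mk k ((M ⊗[k] C) ⊗[k] C) C).flip c) ∘ₗ
            LinearMap.rTensor C ρM := by
        apply TensorProduct.ext'
        intro m₀ c₀
        simp only [LinearMap.comp_apply, LinearMap.flip_apply, TensorProduct.mk_apply,
          LinearEquiv.coe_coe, TensorProduct.assoc_tmul, LinearMap.lTensor_tmul,
          LinearMap.rTensor_tmul, TensorProduct.map_tmul]
      have hco' : LinearMap.rTensor C ρM (ρM m)
          = (TensorProduct.assoc k M C C).symm
              (LinearMap.lTensor M (Coalgebra.comul (R := k) (A := C)) (ρM m)) := by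
        rw [← hcoassoc m]
        simp
      have hLam : actM smul ψ ∘ₗ LinearMap.lTensor (M ⊗[k] C) γ ∘ₗ
            (TensorProduct.assoc k (M ⊗[k] C) C C).toLinearMap ∘ₗ
            ((TensorProduct.mk k ((M ⊗[k] C) ⊗[k] C) C).flip c) ∘ₗ
            (TensorProduct.assoc k M C C).symm.toLinearMap ∘ₗ
            LinearMap.lTensor M (Coalgebra.comul (R := k) (A := C))
          = LinearMap.rTensor C (TensorProduct.lift smul ∘ₗ LinearMap.lTensor M γ ∘ₗ
              (TensorProduct.assoc k M C C).toLinearMap) ∘ₗ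
            (TensorProduct.assoc k (M ⊗[k] C) C C).symm.toLinearMap ∘ₗ
            ((TensorProduct.mk k (M ⊗[k] C) (C ⊗[k] C)).flip
              (Coalgebra.comul (R := k) c)) := by
        apply TensorProduct.ext'
        intro m₀ c₀
        have hPhi : actM smul ψ ∘ₗ LinearMap.lTensor (M ⊗[k] C) γ ∘ₗ
              (TensorProduct.assoc k (M ⊗[k] C) C C).toLinearMap ∘ₗ
              ((TensorProduct.mk k ((M ⊗[k] C) ⊗[k] C) C).flip c) ∘ₗ
              (TensorProduct.assoc k M C C).symm.toLinearMap ∘ₗ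
              TensorProduct.mk k M (C ⊗[k] C) m₀
            = LinearMap.rTensor C (TensorProduct.lift smul) ∘ₗ
              (TensorProduct.assoc k M A C).symm.toLinearMap ∘ₗ
              TensorProduct.mk k M (A ⊗[k] C) m₀ ∘ₗ ψ ∘ₗ
              LinearMap.lTensor C γ ∘ₗ
              (TensorProduct.assoc k C C C).toLinearMap ∘ₗ
              ((TensorProduct.mk k (C ⊗[k] C) C).flip c) := by
          apply TensorProduct.ext'
          intro c₁ c₂
          simp only [LinearMap.comp_apply, LinearMap.flip_apply, TensorProduct.mk_apply,
            LinearEquiv.coe_coe, TensorProduct.assoc_symm_tmul, TensorProduct.assoc_tmul,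
            LinearMap.lTensor_tmul, actM]
        have hXi : LinearMap.rTensor C (TensorProduct.lift smul) ∘ₗ
              (TensorProduct.assoc k M A C).symm.toLinearMap ∘ₗ
              TensorProduct.mk k M (A ⊗[k] C) m₀ ∘ₗ
              LinearMap.rTensor C γ ∘ₗ
              (TensorProduct.assoc k C C C).symm.toLinearMap ∘ₗ
              TensorProduct.mk k C (C ⊗[k] C) c₀
            = LinearMap.rTensor C (TensorProduct.lift smul ∘ₗ LinearMap.lTensor M γ ∘ₗ
                (TensorProduct.assoc k M C C).toLinearMap) ∘ₗ
              (TensorProduct.assoc k (M ⊗[k] C) C C).symm.toLinearMap ∘ₗ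
              TensorProduct.mk k (M ⊗[k] C) (C ⊗[k] C) (m₀ ⊗ₜ[k] c₀) := by
          apply TensorProduct.ext'
          intro c₁ c₂
          simp only [LinearMap.comp_apply, LinearMap.flip_apply, TensorProduct.mk_apply,
            LinearEquiv.coe_coe, TensorProduct.assoc_symm_tmul, TensorProduct.assoc_tmul,
            LinearMap.lTensor_tmul, LinearMap.rTensor_tmul, TensorProduct.lift.tmul]
        have ePhi := LinearMap.congr_fun hPhi (Coalgebra.comul (R := k) c₀)
        have eXi := LinearMap.congr_fun hXi (Coalgebra.comul (R := k) c)
        simp only [LinearMap.comp_apply, LinearMap.flip_apply, TensorProduct.mk_apply,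
          LinearEquiv.coe_coe] at ePhi eXi
        simp only [LinearMap.comp_apply, LinearMap.flip_apply, TensorProduct.mk_apply,
          LinearEquiv.coe_coe, LinearMap.lTensor_tmul]
        rw [ePhi, hγcol c₀ c, eXi]
      have eV := LinearMap.congr_fun hV (ρM m)
      have eN := LinearMap.congr_fun hN (ρM m)
      have eLam := LinearMap.congr_fun hLam (ρM m)
      simp only [LinearMap.comp_apply, LinearMap.flip_apply, TensorProduct.mk_apply,
        LinearEquiv.coe_coe] at eV eN eLam
      have hnu : nuGamma smul ρM γ (m ⊗ₜ[k] c)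
          = TensorProduct.lift smul (LinearMap.lTensor M γ
              ((TensorProduct.assoc k M C C) (ρM m ⊗ₜ[k] c))) := by
        simp only [nuGamma, LinearMap.comp_apply, LinearEquiv.coe_coe,
          LinearMap.rTensor_tmul]
      have hH : LinearMap.rTensor C (nuGamma smul ρM γ) ∘ₗ
            (TensorProduct.assoc k M C C).symm.toLinearMap ∘ₗ
            TensorProduct.mk k M (C ⊗[k] C) m
          = LinearMap.rTensor C (TensorProduct.lift smul ∘ₗ LinearMap.lTensor M γ ∘ₗ
              (TensorProduct.assoc k M C C).toLinearMap) ∘ₗ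
            (TensorProduct.assoc k (M ⊗[k] C) C C).symm.toLinearMap ∘ₗ
            TensorProduct.mk k (M ⊗[k] C) (C ⊗[k] C) (ρM m) := by
        apply TensorProduct.ext'
        intro c₁ c₂
        simp only [LinearMap.comp_apply, TensorProduct.mk_apply, LinearEquiv.coe_coe,
          TensorProduct.assoc_symm_tmul, LinearMap.rTensor_tmul, nuGamma,
          LinearMap.comp_apply]
      have eH := LinearMap.congr_fun hH (Coalgebra.comul (R := k) c)
      simp only [LinearMap.comp_apply, TensorProduct.mk_apply, LinearEquiv.coe_coe] at eH
      simp only [LinearMap.lTensor_tmul]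
      rw [hnu, eV, eN, hco', eLam, ← eH]
end
end

section
/- (Maschke-type theorem, splitting form, for entwined modules.) Let (A,C)_ψ be an entwining structure admitting a normalized integral map γ : C ⊗ C → A. Let M and N be entwined (A,C)_ψ-modules and let f : M → N be a morphism of entwined modules (i.e. f is right A-linear and (f ⊗ C) ∘ ρ^M = ρ^N ∘ f). Suppose there exists a right A-linear map h : N → M with f ∘ h = id_N. Then the map h' := ν_M ∘ (h ⊗ C) ∘ ρ^N : N → M, where ν_M(m ⊗ c) = Σ m₍₀₎·γ(m₍₁₎ ⊗ c), is a morphism of entwined modules (right A-linear and (h' ⊗ C) ∘ ρ^N = ρ^M ∘ h') satisfying f ∘ h' = id_N. -/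
set_option linter.unusedSectionVars false
set_option maxHeartbeats 1000000


/-!
STATEMENT 11 (Maschke-type theorem for entwined modules, splitting form):
if f : M → N is a morphism of entwined modules which splits as a right
A-module map, then it splits as a morphism of entwined modules, via
h' = ν_M ∘ (h ⊗ C) ∘ ρ^N.
-/

open TensorProduct

noncomputable section

variable {k A C M N : Type*} [CommRing k] [Ring A] [Algebra k A]
  [AddCommGroup C] [Module k C] [Coalgebra k C]
  [AddCommGroup M] [Module k M] [AddCommGroup N] [Module k N]

/-! ### Auxiliary definitions and lemmas for the proof -/

def auxG (γ : C ⊗[k] C →ₗ[k] A) (c : C) : C →ₗ[k] A :=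
  γ ∘ₗ (TensorProduct.mk k C C).flip c

lemma auxG_apply (γ : C ⊗[k] C →ₗ[k] A) (c c₀ : C) :
    auxG γ c c₀ = γ (c₀ ⊗ₜ c) := rfl

def auxK (ψ : C ⊗[k] A →ₗ[k] A ⊗[k] C) (γ : C ⊗[k] C →ₗ[k] A) :
    C ⊗[k] (A ⊗[k] C) →ₗ[k] A :=
  LinearMap.mul' k A ∘ₗ LinearMap.lTensor A γ ∘ₗ
    (TensorProduct.assoc k A C C).toLinearMap ∘ₗ LinearMap.rTensor C ψ ∘ₗ
    (TensorProduct.assoc k C A C).symm.toLinearMap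

def auxQ (smul : M →ₗ[k] A →ₗ[k] M) (γ : C ⊗[k] C →ₗ[k] A) :
    (M ⊗[k] C) ⊗[k] C →ₗ[k] M :=
  TensorProduct.lift smul ∘ₗ LinearMap.lTensor M γ ∘ₗ
    (TensorProduct.assoc k M C C).toLinearMap

def auxP (smul : M →ₗ[k] A →ₗ[k] M) (γ : C ⊗[k] C →ₗ[k] A) :
    (M ⊗[k] C) ⊗[k] (C ⊗[k] C) →ₗ[k] M ⊗[k] C :=
  LinearMap.rTensor C (auxQ smul γ) ∘ₗ
    (TensorProduct.assoc k (M ⊗[k] C) C C).symm.toLinearMap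

lemma auxQ_tmul (smul : M →ₗ[k] A →ₗ[k] M) (γ : C ⊗[k] C →ₗ[k] A)
    (m : M) (c e : C) :
    auxQ smul γ ((m ⊗ₜ c) ⊗ₜ e) = smul m (γ (c ⊗ₜ e)) := by
  simp [auxQ]

lemma auxP_tmul (smul : M →ₗ[k] A →ₗ[k] M) (γ : C ⊗[k] C →ₗ[k] A)
    (w : M ⊗[k] C) (e1 e2 : C) :
    auxP smul γ (w ⊗ₜ (e1 ⊗ₜ e2)) = auxQ smul γ (w ⊗ₜ e1) ⊗ₜ e2 := by
  simp [auxP]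

lemma nuGamma_eq (smul : M →ₗ[k] A →ₗ[k] M) (ρ : M →ₗ[k] M ⊗[k] C)
    (γ : C ⊗[k] C →ₗ[k] A) (x : M ⊗[k] C) :
    nuGamma smul ρ γ x = auxQ smul γ (LinearMap.rTensor C ρ x) := rfl

lemma actM_tmul (smul : M →ₗ[k] A →ₗ[k] M) (ψ : C ⊗[k] A →ₗ[k] A ⊗[k] C)
    (m : M) (c : C) (a : A) :
    actM smul ψ ((m ⊗ₜ c) ⊗ₜ a) =
      LinearMap.rTensor C (TensorProduct.lift smul)
        ((TensorProduct.assoc k M A C).symm (m ⊗ₜ ψ (c ⊗ₜ a))) := by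
  simp [actM]

lemma nuGamma_tmul (smul : M →ₗ[k] A →ₗ[k] M) (ρ : M →ₗ[k] M ⊗[k] C)
    (γ : C ⊗[k] C →ₗ[k] A) (m : M) (c : C) :
    nuGamma smul ρ γ (m ⊗ₜ c) =
      TensorProduct.lift smul (LinearMap.lTensor M γ
        ((TensorProduct.assoc k M C C) (ρ m ⊗ₜ c))) := by
  simp [nuGamma]

lemma rlift_tmul (smul : M →ₗ[k] A →ₗ[k] M) (m : M) (a : A) (c : C) :
    LinearMap.rTensor C (TensorProduct.lift smul)
      ((TensorProduct.assoc k M A C).symm (m ⊗ₜ (a ⊗ₜ c))) = smul m a ⊗ₜ c := by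
  simp


theorem statement11 (ψ : C ⊗[k] A →ₗ[k] A ⊗[k] C)
    -- (i) ψ ∘ (C ⊗ μ) = (μ ⊗ C) ∘ (A ⊗ ψ) ∘ (ψ ⊗ A)
    (hmul : ∀ (c : C) (a b : A), ψ (c ⊗ₜ (a * b)) = act ψ (ψ (c ⊗ₜ a) ⊗ₜ b))
    -- (ii) (A ⊗ Δ) ∘ ψ = (ψ ⊗ C) ∘ (C ⊗ ψ) ∘ (Δ ⊗ A)
    (hcomul : LinearMap.lTensor A (Coalgebra.comul (R := k) (A := C)) ∘ₗ ψ =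
      (TensorProduct.assoc k A C C).toLinearMap ∘ₗ
        LinearMap.rTensor C ψ ∘ₗ
        (TensorProduct.assoc k C A C).symm.toLinearMap ∘ₗ
        LinearMap.lTensor C ψ ∘ₗ
        (TensorProduct.assoc k C C A).toLinearMap ∘ₗ
        LinearMap.rTensor A (Coalgebra.comul (R := k) (A := C)))
    -- (iii) ψ(c ⊗ 1) = 1 ⊗ c
    (hone : ∀ c : C, ψ (c ⊗ₜ (1 : A)) = (1 : A) ⊗ₜ c)
    -- (iv) (A ⊗ ε)(ψ(c ⊗ a)) = ε(c)a
    (hcounit : ∀ (c : C) (a : A),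
      epsA (ψ (c ⊗ₜ a)) = Coalgebra.counit (R := k) c • a)
    -- γ is a normalized integral map:
    (γ : C ⊗[k] C →ₗ[k] A)
    (hγnorm : ∀ c : C,
      γ (Coalgebra.comul (R := k) c) = Coalgebra.counit (R := k) c • (1 : A))
    (hγbal : ∀ (c c' : C) (a : A),
      LinearMap.mul' k A
        (LinearMap.lTensor A γ
          ((TensorProduct.assoc k A C C)
            (LinearMap.rTensor C ψ
              ((TensorProduct.assoc k C A C).symm
                (c ⊗ₜ (ψ (c' ⊗ₜ a))))))) = γ (c ⊗ₜ c') * a)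
    (hγcol : ∀ c c' : C,
      ψ (LinearMap.lTensor C γ
          ((TensorProduct.assoc k C C C)
            ((Coalgebra.comul (R := k) c) ⊗ₜ c'))) =
        LinearMap.rTensor C γ
          ((TensorProduct.assoc k C C C).symm
            (c ⊗ₜ (Coalgebra.comul (R := k) c'))))
    -- M is an entwined (A,C)_ψ-module:
    (smulM : M →ₗ[k] A →ₗ[k] M)
    (hMone : ∀ m : M, smulM m 1 = m)
    (hMassoc : ∀ (m : M) (a b : A), smulM (smulM m a) b = smulM m (a * b))
    (ρM : M →ₗ[k] M ⊗[k] C)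
    (hMcounital : ∀ m : M, epsM (ρM m) = m)
    (hMcoassoc : ∀ m : M,
      (TensorProduct.assoc k M C C) (LinearMap.rTensor C ρM (ρM m)) =
        LinearMap.lTensor M (Coalgebra.comul (R := k)) (ρM m))
    (hMentwined : ∀ (m : M) (a : A),
      ρM (smulM m a) = actM smulM ψ (ρM m ⊗ₜ a))
    -- N is an entwined (A,C)_ψ-module:
    (smulN : N →ₗ[k] A →ₗ[k] N)
    (hNone : ∀ n : N, smulN n 1 = n)
    (hNassoc : ∀ (n : N) (a b : A), smulN (smulN n a) b = smulN n (a * b))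
    (ρN : N →ₗ[k] N ⊗[k] C)
    (hNcounital : ∀ n : N, epsM (ρN n) = n)
    (hNcoassoc : ∀ n : N,
      (TensorProduct.assoc k N C C) (LinearMap.rTensor C ρN (ρN n)) =
        LinearMap.lTensor N (Coalgebra.comul (R := k)) (ρN n))
    (hNentwined : ∀ (n : N) (a : A),
      ρN (smulN n a) = actM smulN ψ (ρN n ⊗ₜ a))
    -- f : M → N is a morphism of entwined modules:
    (f : M →ₗ[k] N)
    (hflin : ∀ (m : M) (a : A), f (smulM m a) = smulN (f m) a)
    (hfcol : ∀ m : M, LinearMap.rTensor C f (ρM m) = ρN (f m))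
    -- h : N → M is a right A-linear splitting of f:
    (h : N →ₗ[k] M)
    (hhlin : ∀ (n : N) (a : A), h (smulN n a) = smulM (h n) a)
    (hsplit : ∀ n : N, f (h n) = n) :
    -- h' := ν_M ∘ (h ⊗ C) ∘ ρ^N is a morphism of entwined modules splitting f:
    (∀ (n : N) (a : A),
      (nuGamma smulM ρM γ ∘ₗ LinearMap.rTensor C h ∘ₗ ρN) (smulN n a) =
        smulM ((nuGamma smulM ρM γ ∘ₗ LinearMap.rTensor C h ∘ₗ ρN) n) a) ∧
    (∀ n : N,
      LinearMap.rTensor C (nuGamma smulM ρM γ ∘ₗ LinearMap.rTensor C h ∘ₗ ρN)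
          (ρN n) =
        ρM ((nuGamma smulM ρM γ ∘ₗ LinearMap.rTensor C h ∘ₗ ρN) n)) ∧
    (∀ n : N, f ((nuGamma smulM ρM γ ∘ₗ LinearMap.rTensor C h ∘ₗ ρN) n) = n) := by
    -- Lemma A: naturality of ν under f
  have lemA : ∀ x : M ⊗[k] C,
      f (nuGamma smulM ρM γ x) = nuGamma smulN ρN γ (LinearMap.rTensor C f x) := by
    intro x
    induction x using TensorProduct.induction_on with
    | zero => simp
    | add u v hu hv => simp only [map_add, hu, hv]
    | tmul m c =>
      rw [LinearMap.rTensor_tmul, nuGamma_tmul, nuGamma_tmul, ← hfcol]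
      generalize ρM m = w
      induction w using TensorProduct.induction_on with
      | zero => simp
      | add u v hu hv => simp only [add_tmul, map_add, hu, hv]
      | tmul m0 c0 => simp [hflin]
  -- Lemma B: ν_N ∘ ρ^N = id
  have lemB : ∀ n : N, nuGamma smulN ρN γ (ρN n) = n := by
    intro n
    rw [nuGamma_eq]
    have h1 : LinearMap.rTensor C ρN (ρN n) =
        (TensorProduct.assoc k N C C).symm
          (LinearMap.lTensor N (Coalgebra.comul (R := k)) (ρN n)) := by
      rw [← hNcoassoc n, LinearEquiv.symm_apply_apply]
    rw [h1]
    conv_rhs => rw [← hNcounital n]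
    generalize ρN n = x
    induction x using TensorProduct.induction_on with
    | zero => simp
    | add u v hu hv => simp only [map_add, hu, hv]
    | tmul n1 c1 =>
      rw [LinearMap.lTensor_tmul]
      have hs : ∀ d : C ⊗[k] C,
          auxQ smulN γ ((TensorProduct.assoc k N C C).symm (n1 ⊗ₜ d)) = smulN n1 (γ d) := by
        intro d
        induction d using TensorProduct.induction_on with
        | zero => simp
        | add u v hu hv => simp only [tmul_add, map_add, hu, hv]
        | tmul e1 e2 => rw [assoc_symm_tmul, auxQ_tmul]
      rw [hs, hγnorm, map_smul, hNone]
      simp [epsM]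
  -- Lemma C: ν_M is A-linear w.r.t. the twisted action
  have lemC : ∀ (x : M ⊗[k] C) (a : A),
      nuGamma smulM ρM γ (actM smulM ψ (x ⊗ₜ a)) = smulM (nuGamma smulM ρM γ x) a := by
    intro x a
    induction x using TensorProduct.induction_on with
    | zero => simp [zero_tmul]
    | add u v hu hv => simp only [add_tmul, map_add, hu, hv, LinearMap.add_apply]
    | tmul m c =>
      rw [actM_tmul]
      have sub1 : ∀ z : A ⊗[k] C,
          nuGamma smulM ρM γ (LinearMap.rTensor C (TensorProduct.lift smulM)
            ((TensorProduct.assoc k M A C).symm (m ⊗ₜ z))) =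
          TensorProduct.lift smulM (LinearMap.lTensor M (auxK ψ γ)
            ((TensorProduct.assoc k M C (A ⊗[k] C)) (ρM m ⊗ₜ z))) := by
        intro z
        induction z using TensorProduct.induction_on with
        | zero => simp [tmul_zero]
        | add u v hu hv => simp only [tmul_add, map_add, hu, hv]
        | tmul a' c' =>
          rw [rlift_tmul, nuGamma_tmul, hMentwined]
          generalize ρM m = w
          induction w using TensorProduct.induction_on with
          | zero => simp [zero_tmul]
          | add u v hu hv => simp only [add_tmul, map_add, hu, hv]
          | tmul m0 c0 =>
            rw [actM_tmul, assoc_tmul, LinearMap.lTensor_tmul, lift.tmul]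
            have hk : auxK ψ γ (c0 ⊗ₜ (a' ⊗ₜ c')) =
                LinearMap.mul' k A (LinearMap.lTensor A γ
                  ((TensorProduct.assoc k A C C) (ψ (c0 ⊗ₜ a') ⊗ₜ c'))) := by
              simp only [auxK, LinearMap.coe_comp, Function.comp_apply,
                LinearEquiv.coe_coe, assoc_symm_tmul, LinearMap.rTensor_tmul]
            rw [hk]
            generalize ψ (c0 ⊗ₜ a') = u
            induction u using TensorProduct.induction_on with
            | zero => simp [tmul_zero, zero_tmul]
            | add p q hp hq =>
              simp only [tmul_add, add_tmul, map_add, hp, hq]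
            | tmul a2 c2 =>
              rw [rlift_tmul, assoc_tmul, LinearMap.lTensor_tmul, assoc_tmul,
                LinearMap.lTensor_tmul, lift.tmul, LinearMap.mul'_apply, hMassoc]
      rw [sub1, nuGamma_tmul]
      generalize ρM m = w
      induction w using TensorProduct.induction_on with
      | zero => simp [zero_tmul]
      | add u v hu hv => simp only [add_tmul, map_add, hu, hv, LinearMap.add_apply]
      | tmul m0 c0 =>
        rw [assoc_tmul, LinearMap.lTensor_tmul, lift.tmul]
        have hb : auxK ψ γ (c0 ⊗ₜ ψ (c ⊗ₜ a)) = γ (c0 ⊗ₜ c) * a := by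
          simp only [auxK, LinearMap.coe_comp, Function.comp_apply, LinearEquiv.coe_coe]
          exact hγbal c0 c a
        rw [hb, assoc_tmul, LinearMap.lTensor_tmul, lift.tmul, hMassoc]
  -- Lemma D: (h ⊗ C) intertwines the twisted actions
  have lemD : ∀ (y : N ⊗[k] C) (a : A),
      LinearMap.rTensor C h (actM smulN ψ (y ⊗ₜ a)) =
        actM smulM ψ (LinearMap.rTensor C h y ⊗ₜ a) := by
    intro y a
    induction y using TensorProduct.induction_on with
    | zero => simp [zero_tmul]
    | add u v hu hv => simp only [add_tmul, map_add, hu, hv]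
    | tmul n0 c0 =>
      rw [actM_tmul, LinearMap.rTensor_tmul, actM_tmul]
      generalize ψ (c0 ⊗ₜ a) = u
      induction u using TensorProduct.induction_on with
      | zero => simp [tmul_zero]
      | add p q hp hq => simp only [tmul_add, map_add, hp, hq]
      | tmul a' c' => rw [rlift_tmul, rlift_tmul, LinearMap.rTensor_tmul, hhlin]
  -- Lemma E: colinearity of ν_M
  have lemE : ∀ x : M ⊗[k] C,
      ρM (nuGamma smulM ρM γ x) =
        LinearMap.rTensor C (nuGamma smulM ρM γ)
          ((TensorProduct.assoc k M C C).symm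
            (LinearMap.lTensor M (Coalgebra.comul (R := k)) x)) := by
    intro x
    induction x using TensorProduct.induction_on with
    | zero => simp
    | add u v hu hv => simp only [map_add, hu, hv]
    | tmul m c =>
      have hR : LinearMap.rTensor C (nuGamma smulM ρM γ)
            ((TensorProduct.assoc k M C C).symm
              (LinearMap.lTensor M (Coalgebra.comul (R := k)) (m ⊗ₜ c))) =
          auxP smulM γ (ρM m ⊗ₜ Coalgebra.comul (R := k) c) := by
        rw [LinearMap.lTensor_tmul]
        generalize Coalgebra.comul (R := k) c = d
        induction d using TensorProduct.induction_on with
        | zero => simp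
        | add u v hu hv => simp only [tmul_add, map_add, hu, hv]
        | tmul e1 e2 =>
          rw [assoc_symm_tmul, auxP_tmul, LinearMap.rTensor_tmul, nuGamma_eq,
            LinearMap.rTensor_tmul]
      have hL : ρM (nuGamma smulM ρM γ (m ⊗ₜ c)) =
          auxP smulM γ (ρM m ⊗ₜ Coalgebra.comul (R := k) c) := by
        rw [nuGamma_eq, LinearMap.rTensor_tmul]
        have stepA : ∀ w : M ⊗[k] C, auxQ smulM γ (w ⊗ₜ c) =
            TensorProduct.lift smulM (LinearMap.lTensor M (auxG γ c) w) := by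
          intro w
          induction w using TensorProduct.induction_on with
          | zero => simp [zero_tmul]
          | add u v hu hv => simp only [add_tmul, map_add, hu, hv]
          | tmul m0 c0 => rw [auxQ_tmul, LinearMap.lTensor_tmul, lift.tmul, auxG_apply]
        rw [stepA]
        have stepB : ∀ w : M ⊗[k] C,
            ρM (TensorProduct.lift smulM (LinearMap.lTensor M (auxG γ c) w)) =
              actM smulM ψ (TensorProduct.map ρM (auxG γ c) w) := by
          intro w
          induction w using TensorProduct.induction_on with
          | zero => simp
          | add u v hu hv => simp only [map_add, hu, hv]
          | tmul m0 c0 =>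
            rw [LinearMap.lTensor_tmul, lift.tmul, map_tmul, hMentwined]
        rw [stepB]
        have stepC : TensorProduct.map ρM (auxG γ c) (ρM m) =
            LinearMap.lTensor (M ⊗[k] C) (auxG γ c)
              ((TensorProduct.assoc k M C C).symm
                (LinearMap.lTensor M (Coalgebra.comul (R := k)) (ρM m))) := by
          rw [← LinearMap.lTensor_comp_rTensor, LinearMap.comp_apply]
          congr 1
          rw [← hMcoassoc m, LinearEquiv.symm_apply_apply]
        rw [stepC]
        have stepD : ∀ w : M ⊗[k] C,
            actM smulM ψ (LinearMap.lTensor (M ⊗[k] C) (auxG γ c)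
              ((TensorProduct.assoc k M C C).symm
                (LinearMap.lTensor M (Coalgebra.comul (R := k)) w))) =
              auxP smulM γ (w ⊗ₜ Coalgebra.comul (R := k) c) := by
          intro w
          induction w using TensorProduct.induction_on with
          | zero => simp
          | add u v hu hv => simp only [map_add, add_tmul, hu, hv]
          | tmul m0 c0 =>
            rw [LinearMap.lTensor_tmul]
            have S1 : ∀ d : C ⊗[k] C,
                actM smulM ψ (LinearMap.lTensor (M ⊗[k] C) (auxG γ c)
                    ((TensorProduct.assoc k M C C).symm (m0 ⊗ₜ d))) =
                  LinearMap.rTensor C (TensorProduct.lift smulM)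
                    ((TensorProduct.assoc k M A C).symm
                      (m0 ⊗ₜ ψ (LinearMap.lTensor C (auxG γ c) d))) := by
              intro d
              induction d using TensorProduct.induction_on with
              | zero => simp [tmul_zero]
              | add u v hu hv => simp only [tmul_add, map_add, hu, hv]
              | tmul c1 c2 =>
                rw [assoc_symm_tmul, LinearMap.lTensor_tmul, actM_tmul,
                  LinearMap.lTensor_tmul]
            rw [S1]
            have S2 : LinearMap.lTensor C (auxG γ c) (Coalgebra.comul (R := k) c0) =
                LinearMap.lTensor C γ ((TensorProduct.assoc k C C C)
                  (Coalgebra.comul (R := k) c0 ⊗ₜ c)) := by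
              generalize Coalgebra.comul (R := k) c0 = d
              induction d using TensorProduct.induction_on with
              | zero => simp [zero_tmul]
              | add u v hu hv => simp only [add_tmul, map_add, hu, hv]
              | tmul c1 c2 =>
                rw [assoc_tmul, LinearMap.lTensor_tmul, LinearMap.lTensor_tmul,
                  auxG_apply]
            rw [S2, hγcol c0 c]
            have S3 : ∀ d' : C ⊗[k] C,
                LinearMap.rTensor C (TensorProduct.lift smulM)
                    ((TensorProduct.assoc k M A C).symm
                      (m0 ⊗ₜ LinearMap.rTensor C γ
                        ((TensorProduct.assoc k C C C).symm (c0 ⊗ₜ d')))) =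
                  auxP smulM γ ((m0 ⊗ₜ c0) ⊗ₜ d') := by
              intro d'
              induction d' using TensorProduct.induction_on with
              | zero => simp [tmul_zero]
              | add u v hu hv => simp only [tmul_add, map_add, hu, hv]
              | tmul e1 e2 =>
                rw [assoc_symm_tmul, LinearMap.rTensor_tmul, assoc_symm_tmul,
                  LinearMap.rTensor_tmul, auxP_tmul, auxQ_tmul, lift.tmul]
            exact S3 _
        exact stepD (ρM m)
      rw [hL, hR]
  refine ⟨?_, ?_, ?_⟩
  · -- A-linearity of h'
    intro n a
    simp only [LinearMap.comp_apply]
    rw [hNentwined, lemD, lemC]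
  · -- colinearity of h'
    intro n
    simp only [LinearMap.comp_apply]
    rw [lemE]
    have c1 : LinearMap.lTensor M (Coalgebra.comul (R := k))
          (LinearMap.rTensor C h (ρN n)) =
        LinearMap.rTensor (C ⊗[k] C) h
          (LinearMap.lTensor N (Coalgebra.comul (R := k)) (ρN n)) := by
      generalize ρN n = y
      induction y using TensorProduct.induction_on with
      | zero => simp
      | add u v hu hv => simp only [map_add, hu, hv]
      | tmul n1 c1' => simp
    rw [c1, ← hNcoassoc n]
    have c2 : ∀ v : (N ⊗[k] C) ⊗[k] C,
        (TensorProduct.assoc k M C C).symm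
            (LinearMap.rTensor (C ⊗[k] C) h ((TensorProduct.assoc k N C C) v)) =
          LinearMap.rTensor C (LinearMap.rTensor C h) v := by
      intro v
      induction v using TensorProduct.induction_on with
      | zero => simp
      | add u v hu hv => simp only [map_add, hu, hv]
      | tmul x c2' =>
        induction x using TensorProduct.induction_on with
        | zero => simp [zero_tmul]
        | add u v hu hv => simp only [add_tmul, map_add, hu, hv]
        | tmul n1 c1' => simp
    rw [c2]
    simp only [LinearMap.rTensor_comp, LinearMap.comp_apply]
  · -- f ∘ h' = id
    intro n
    simp only [LinearMap.comp_apply]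
    rw [lemA]
    have hfh : LinearMap.rTensor C f (LinearMap.rTensor C h (ρN n)) = ρN n := by
      rw [← LinearMap.comp_apply, ← LinearMap.rTensor_comp]
      have : f ∘ₗ h = LinearMap.id := by ext n'; simp [hsplit]
      rw [this, LinearMap.rTensor_id, LinearMap.id_apply]
    rw [hfh, lemB]
end
end

section
/- (Dual Takeuchi observation: the C-algebroid structure on C ⊗ A.) Let (A,C)_ψ be an entwining structure. Define k-linear maps λ := Δ ⊗ A : C ⊗ A → C ⊗ C ⊗ A and ρ := (C ⊗ ψ) ∘ (Δ ⊗ A) : C ⊗ A → C ⊗ A ⊗ C. Then: (1) ρ is a counital coassociative right C-coaction: (C ⊗ A ⊗ ε) ∘ ρ = id and (ρ ⊗ C) ∘ ρ = (C ⊗ A ⊗ Δ) ∘ ρ; (2) λ and ρ make C ⊗ A a (C,C)-bicomodule: (λ ⊗ C) ∘ ρ = (C ⊗ ρ) ∘ λ; (3) the product C ⊗ μ is compatible with ρ: ρ((C ⊗ μ)((c ⊗ a) ⊗ b)) = (C ⊗ μ ⊗ C)((C ⊗ A ⊗ ψ)(ρ(c ⊗ a) ⊗ b)) for all a, b ∈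 A, c ∈ C; (4) ρ(c ⊗ 1) = Σ c₍₁₎ ⊗ 1 ⊗ c₍₂₎ for all c ∈ C. -/
/-!
STATEMENT 12 (Dual Takeuchi observation): for an entwining structure (A,C)_ψ,
the maps λ = Δ ⊗ A and ρ = (C ⊗ ψ) ∘ (Δ ⊗ A) make C ⊗ A a (C,C)-bicomodule
whose product C ⊗ μ and unit are compatible with ρ.
-/

open TensorProduct

noncomputable section

variable {k A C : Type*} [CommRing k] [Ring A] [Algebra k A]
  [AddCommGroup C] [Module k C] [Coalgebra k C]

/-- The left coaction `λ = Δ ⊗ A : C ⊗ A → (C ⊗ C) ⊗ A`. -/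
def lam : C ⊗[k] A →ₗ[k] (C ⊗[k] C) ⊗[k] A :=
  LinearMap.rTensor A (Coalgebra.comul (R := k) (A := C))

/-- The right coaction `ρ = (C ⊗ ψ) ∘ (Δ ⊗ A) : C ⊗ A → C ⊗ (A ⊗ C)`. -/
def rho (ψ : C ⊗[k] A →ₗ[k] A ⊗[k] C) :
    C ⊗[k] A →ₗ[k] C ⊗[k] (A ⊗[k] C) :=
  LinearMap.lTensor C ψ ∘ₗ
    (TensorProduct.assoc k C C A).toLinearMap ∘ₗ
    LinearMap.rTensor A (Coalgebra.comul (R := k) (A := C))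

lemma assoc_left {M N P : Type*} [AddCommGroup M] [Module k M] [AddCommGroup N] [Module k N]
    [AddCommGroup P] [Module k P] (z : M ⊗[k] N) (p : P) :
    (TensorProduct.assoc k M N P) (z ⊗ₜ[k] p)
      = LinearMap.lTensor M ((TensorProduct.mk k N P).flip p) z := by
  induction z using TensorProduct.induction_on with
  | zero => simp
  | tmul m n => simp
  | add x y hx hy => simp [add_tmul, hx, hy]

lemma assoc_symm_right {M N P : Type*} [AddCommGroup M] [Module k M] [AddCommGroup N] [Module k N]
    [AddCommGroup P] [Module k P] (m : M) (z : N ⊗[k] P) :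
    (TensorProduct.assoc k M N P).symm (m ⊗ₜ[k] z)
      = LinearMap.rTensor P (TensorProduct.mk k M N m) z := by
  induction z using TensorProduct.induction_on with
  | zero => simp
  | tmul n p => simp
  | add x y hx hy => simp [tmul_add, hx, hy]

def psiA (ψ : C ⊗[k] A →ₗ[k] A ⊗[k] C) (a : A) : C →ₗ[k] A ⊗[k] C :=
  ψ ∘ₗ (TensorProduct.mk k C A).flip a

@[simp] lemma psiA_apply (ψ : C ⊗[k] A →ₗ[k] A ⊗[k] C) (a : A) (c : C) :
    psiA ψ a c = ψ (c ⊗ₜ a) := rfl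

lemma rho_tmul (ψ : C ⊗[k] A →ₗ[k] A ⊗[k] C) (c : C) (a : A) :
    rho ψ (c ⊗ₜ a)
      = LinearMap.lTensor C (psiA ψ a) (Coalgebra.comul (R := k) c) := by
  simp only [rho, LinearMap.coe_comp, Function.comp_apply, LinearEquiv.coe_coe,
    LinearMap.rTensor_tmul, assoc_left, ← LinearMap.lTensor_comp_apply]
  rfl

/-- `η = (assoc) ∘ (ψ ⊗ C) ∘ (assoc⁻¹) ∘ (C ⊗ ψa) : C ⊗ C → A ⊗ (C ⊗ C)` -/
def eta (ψ : C ⊗[k] A →ₗ[k] A ⊗[k] C) (a : A) : C ⊗[k] C →ₗ[k] A ⊗[k] (C ⊗[k] C) :=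
  (TensorProduct.assoc k A C C).toLinearMap ∘ₗ
    LinearMap.rTensor C ψ ∘ₗ
    (TensorProduct.assoc k C A C).symm.toLinearMap ∘ₗ
    LinearMap.lTensor C (psiA ψ a)

/-- value of `G` on `w`. -/
def gm (ψ : C ⊗[k] A →ₗ[k] A ⊗[k] C) (w : A ⊗[k] C) : C →ₗ[k] A ⊗[k] (C ⊗[k] C) :=
  (TensorProduct.assoc k A C C).toLinearMap ∘ₗ
    LinearMap.rTensor C ψ ∘ₗ
    (TensorProduct.assoc k C A C).symm.toLinearMap ∘ₗ
    (TensorProduct.mk k C (A ⊗[k] C)).flip w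

lemma aux1b (ψ : C ⊗[k] A →ₗ[k] A ⊗[k] C) (c₁ : C) (w : A ⊗[k] C) :
    LinearMap.lTensor C (TensorProduct.assoc k A C C).toLinearMap
        ((TensorProduct.assoc k C (A ⊗[k] C) C)
          (LinearMap.rTensor C (rho ψ ∘ₗ TensorProduct.mk k C A c₁) w)) =
      LinearMap.lTensor C (gm ψ w) (Coalgebra.comul (R := k) c₁) := by
  induction w using TensorProduct.induction_on with
  | zero => simp [gm]
  | add x y hx hy =>
    simp only [map_add, hx, hy, gm, LinearMap.comp_add, LinearMap.lTensor_add,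
      LinearMap.add_apply]
  | tmul a' c' =>
    rw [LinearMap.rTensor_tmul, LinearMap.comp_apply, TensorProduct.mk_apply,
      rho_tmul, assoc_left, ← LinearMap.lTensor_comp_apply,
      ← LinearMap.lTensor_comp_apply]
    exact LinearMap.congr_fun (congrArg (LinearMap.lTensor C)
      (LinearMap.ext fun c'' => by simp [gm, TensorProduct.assoc_symm_tmul])) _

lemma l1b (ψ : C ⊗[k] A →ₗ[k] A ⊗[k] C) (a : A) (y : C ⊗[k] C) :
    LinearMap.lTensor C (TensorProduct.assoc k A C C).toLinearMap
        ((TensorProduct.assoc k C (A ⊗[k] C) C)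
          (LinearMap.rTensor C (rho ψ)
            ((TensorProduct.assoc k C A C).symm (LinearMap.lTensor C (psiA ψ a) y)))) =
      LinearMap.lTensor C (eta ψ a)
        ((TensorProduct.assoc k C C C)
          (LinearMap.rTensor C (Coalgebra.comul (R := k)) y)) := by
  induction y using TensorProduct.induction_on with
  | zero => simp
  | add x y hx hy => simp only [map_add, hx, hy]
  | tmul c₁ c₂ =>
    rw [LinearMap.lTensor_tmul, assoc_symm_right, ← LinearMap.rTensor_comp_apply,
      aux1b, LinearMap.rTensor_tmul, assoc_left, ← LinearMap.lTensor_comp_apply]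
    exact LinearMap.congr_fun (congrArg (LinearMap.lTensor C)
      (LinearMap.ext fun c₁' => by simp [gm, eta, assoc_symm_right])) _

lemma aux2 (c₁ : C) (w : A ⊗[k] C) :
    (TensorProduct.assoc k C C (A ⊗[k] C))
        ((TensorProduct.assoc k (C ⊗[k] C) A C)
          (LinearMap.rTensor C ((lam (k := k)) ∘ₗ TensorProduct.mk k C A c₁) w)) =
      LinearMap.lTensor C ((TensorProduct.mk k C (A ⊗[k] C)).flip w)
        (Coalgebra.comul (R := k) c₁) := by
  induction w using TensorProduct.induction_on with
  | zero => simp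
  | add x y hx hy =>
    simp only [map_add, hx, hy, LinearMap.lTensor_add, LinearMap.add_apply]
  | tmul a' c' =>
    rw [LinearMap.rTensor_tmul, LinearMap.comp_apply, TensorProduct.mk_apply]
    show (TensorProduct.assoc k C C (A ⊗[k] C))
        ((TensorProduct.assoc k (C ⊗[k] C) A C)
          ((LinearMap.rTensor A (Coalgebra.comul (R := k)) (c₁ ⊗ₜ a')) ⊗ₜ c')) = _
    rw [LinearMap.rTensor_tmul, TensorProduct.assoc_tmul, assoc_left]

lemma l2 (ψ : C ⊗[k] A →ₗ[k] A ⊗[k] C) (a : A) (y : C ⊗[k] C) :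
    (TensorProduct.assoc k C C (A ⊗[k] C))
        ((TensorProduct.assoc k (C ⊗[k] C) A C)
          (LinearMap.rTensor C (lam (k := k))
            ((TensorProduct.assoc k C A C).symm (LinearMap.lTensor C (psiA ψ a) y)))) =
      LinearMap.lTensor C (LinearMap.lTensor C (psiA ψ a))
        ((TensorProduct.assoc k C C C)
          (LinearMap.rTensor C (Coalgebra.comul (R := k)) y)) := by
  induction y using TensorProduct.induction_on with
  | zero => simp
  | add x y hx hy => simp only [map_add, hx, hy]
  | tmul c₁ c₂ =>
    rw [LinearMap.lTensor_tmul, assoc_symm_right, ← LinearMap.rTensor_comp_apply,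
      aux2, LinearMap.rTensor_tmul, assoc_left, ← LinearMap.lTensor_comp_apply]
    exact LinearMap.congr_fun (congrArg (LinearMap.lTensor C)
      (LinearMap.ext fun c₁' => by simp)) _

theorem statement12 (ψ : C ⊗[k] A →ₗ[k] A ⊗[k] C)
    -- (i) ψ ∘ (C ⊗ μ) = (μ ⊗ C) ∘ (A ⊗ ψ) ∘ (ψ ⊗ A)
    (hmul : ∀ (c : C) (a b : A), ψ (c ⊗ₜ (a * b)) = act ψ (ψ (c ⊗ₜ a) ⊗ₜ b))
    -- (ii) (A ⊗ Δ) ∘ ψ = (ψ ⊗ C) ∘ (C ⊗ ψ) ∘ (Δ ⊗ A)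
    (hcomul : LinearMap.lTensor A (Coalgebra.comul (R := k) (A := C)) ∘ₗ ψ =
      (TensorProduct.assoc k A C C).toLinearMap ∘ₗ
        LinearMap.rTensor C ψ ∘ₗ
        (TensorProduct.assoc k C A C).symm.toLinearMap ∘ₗ
        LinearMap.lTensor C ψ ∘ₗ
        (TensorProduct.assoc k C C A).toLinearMap ∘ₗ
        LinearMap.rTensor A (Coalgebra.comul (R := k) (A := C)))
    -- (iii) ψ(c ⊗ 1) = 1 ⊗ c
    (hone : ∀ c : C, ψ (c ⊗ₜ (1 : A)) = (1 : A) ⊗ₜ c)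
    -- (iv) (A ⊗ ε)(ψ(c ⊗ a)) = ε(c)a
    (hcounit : ∀ (c : C) (a : A),
      epsA (ψ (c ⊗ₜ a)) = Coalgebra.counit (R := k) c • a) :
    -- (1) ρ is a counital coassociative right C-coaction:
    -- (C ⊗ A ⊗ ε) ∘ ρ = id
    (∀ x : C ⊗[k] A, LinearMap.lTensor C (epsA (k := k)) (rho ψ x) = x) ∧
    -- (ρ ⊗ C) ∘ ρ = (C ⊗ A ⊗ Δ) ∘ ρ
    (∀ x : C ⊗[k] A,
      LinearMap.lTensor C (TensorProduct.assoc k A C C).toLinearMap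
          ((TensorProduct.assoc k C (A ⊗[k] C) C)
            (LinearMap.rTensor C (rho ψ)
              ((TensorProduct.assoc k C A C).symm (rho ψ x)))) =
        LinearMap.lTensor C
          (LinearMap.lTensor A (Coalgebra.comul (R := k) (A := C)))
          (rho ψ x)) ∧
    -- (2) bicomodule compatibility: (λ ⊗ C) ∘ ρ = (C ⊗ ρ) ∘ λ
    (∀ x : C ⊗[k] A,
      (TensorProduct.assoc k C C (A ⊗[k] C))
          ((TensorProduct.assoc k (C ⊗[k] C) A C)
            (LinearMap.rTensor C (lam (k := k))
              ((TensorProduct.assoc k C A C).symm (rho ψ x)))) =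
        LinearMap.lTensor C (rho ψ)
          ((TensorProduct.assoc k C C A) (lam x))) ∧
    -- (3) compatibility of ρ with the product C ⊗ μ
    (∀ (c : C) (a b : A),
      rho ψ (c ⊗ₜ (a * b)) =
        LinearMap.lTensor C (act ψ)
          ((TensorProduct.assoc k C (A ⊗[k] C) A) ((rho ψ (c ⊗ₜ a)) ⊗ₜ b))) ∧
    -- (4) ρ(c ⊗ 1) = Σ c₍₁₎ ⊗ 1 ⊗ c₍₂₎
    (∀ c : C,
      rho ψ (c ⊗ₜ (1 : A)) =
        LinearMap.lTensor C (TensorProduct.mk k A C 1)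
          (Coalgebra.comul (R := k) c)) := by
  refine ⟨?_, ?_, ?_, ?_, ?_⟩
  · -- (1a) counitality
    intro x
    induction x using TensorProduct.induction_on with
    | zero => simp
    | add x y hx hy => simp [hx, hy]
    | tmul c a =>
      rw [rho_tmul, ← LinearMap.lTensor_comp_apply]
      have : (epsA (k := k)) ∘ₗ psiA ψ a
          = LinearMap.toSpanSingleton k A a ∘ₗ Coalgebra.counit (R := k) (A := C) := by
        ext c'; simp [hcounit]
      rw [this, LinearMap.lTensor_comp, LinearMap.comp_apply,
        Coalgebra.lTensor_counit_comul]
      simp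
  · -- (1b) coassociativity
    intro x
    induction x using TensorProduct.induction_on with
    | zero => simp
    | add x y hx hy => simp only [map_add, hx, hy]
    | tmul c a =>
      rw [rho_tmul ψ c a, l1b ψ a, Coalgebra.coassoc_apply,
        ← LinearMap.lTensor_comp_apply, ← LinearMap.lTensor_comp_apply]
      refine LinearMap.congr_fun (congrArg (LinearMap.lTensor C)
        (LinearMap.ext fun c₂ => ?_)) _
      have h := LinearMap.congr_fun hcomul (c₂ ⊗ₜ[k] a)
      simp only [LinearMap.coe_comp, Function.comp_apply, LinearEquiv.coe_coe,
        LinearMap.rTensor_tmul, assoc_left, ← LinearMap.lTensor_comp_apply] at h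
      simp only [LinearMap.coe_comp, Function.comp_apply, psiA_apply, h, eta,
        LinearEquiv.coe_coe]
      rfl
  · -- (2) bicomodule
    intro x
    induction x using TensorProduct.induction_on with
    | zero => simp
    | add x y hx hy => simp only [map_add, hx, hy]
    | tmul c a =>
      rw [rho_tmul ψ c a, l2 ψ a, Coalgebra.coassoc_apply]
      simp only [lam, LinearMap.rTensor_tmul, assoc_left,
        ← LinearMap.lTensor_comp_apply]
      refine LinearMap.congr_fun (congrArg (LinearMap.lTensor C)
        (LinearMap.ext fun c₂ => ?_)) _
      simp [rho_tmul]
  · -- (3) multiplicativity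
    intro c a b
    rw [rho_tmul, rho_tmul, assoc_left, ← LinearMap.lTensor_comp_apply,
      ← LinearMap.lTensor_comp_apply]
    congr 1
    ext c'
    simp [hmul]
  · -- (4) unit
    intro c
    rw [rho_tmul]
    congr 1
    ext c'
    simp [hone]
end
end
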